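/- arXiv:0905.0960 — 3 statements merged into one kernel-verified Lean document; each statement's English description precedes it below -/
import Mathlib

section
/- Let I = I_{(m_1,…,m_t)} ⊆ S be a canonical critical monomial ideal. Then there exists a Stanley decomposition of the ideal I in which every set Z_i has at least n − t + 1 elements; that is, sdepth(I) ≥ n − t + 1 = 1 + sdepth(S/I). -/
open MvPolynomial

noncomputable section

variable (K : Type*) [Field K]

/-- The set of monomials (with coefficient 1) whose variables lie in `Z`. -/
def monomialsIn {σ : Type*} (Z : Set σ) : Set (MvPolynomial σ K) :=
  {p | ∃ a : σ →₀ ℕ, ↑a.support ⊆ Z ∧ p = monomial a 1}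

/-- `u K[Z]` : the `K`-linear span of the polynomials `u * v`, `v` a monomial in `Z`. -/
def stanleySpace {σ : Type*} (u : MvPolynomial σ K) (Z : Set σ) :
    Submodule K (MvPolynomial σ K) :=
  Submodule.span K ((u * ·) '' monomialsIn K Z)


/-- `(u, Z)` is a Stanley decomposition of the monomial ideal `I`:
`I = ⊕ i, u i K[Z i]` as `K`-vector spaces, with each `u i` a monomial belonging to `I`. -/
def IsStanleyDecompOfIdeal {σ : Type*} (I : Ideal (MvPolynomial σ K)) {r : ℕ}
    (u : Fin r → MvPolynomial σ K) (Z : Fin r → Set σ) : Prop :=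
  (∀ i, ∃ a : σ →₀ ℕ, u i = monomial a 1) ∧
  (∀ i, u i ∈ I) ∧
  iSupIndep (fun i : Fin r => stanleySpace K (u i) (Z i)) ∧
  (⨆ i : Fin r, stanleySpace K (u i) (Z i)) = Submodule.restrictScalars K I

/-- The generators `x₁m₁, x₂m₁m₂, …, x_{t-1}m₁⋯m_{t-1}, m₁⋯m_t` (0-indexed) of the
canonical critical monomial ideal `I_{(m₁,…,m_t)}`. -/
def ccGens {n t : ℕ} (ht : t ≤ n) (m : Fin t → MvPolynomial (Fin n) K) (j : Fin t) :
    MvPolynomial (Fin n) K :=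
  (if (j : ℕ) < t - 1 then X (Fin.castLE ht j) else 1) * ∏ k ∈ Finset.Iic j, m k

/-!
Writing the generators as monomials `x^{b_j}`, the ideal is the span of the monomials `x^d` with
`d ≥ b_j` for some `j`. Take the Stanley space `x^{b_j} K[x_j, …, x_n]` for each generator: its
exponents are the `d ≥ b_j` that agree with `b_j` in the coordinates before `j`. These cones are
disjoint, because `b_i` exceeds every later `b_j` by exactly one in coordinate `i`. They cover
the ideal: if `d ≥ b_j` differs from `b_j` in a coordinate `i < j`, then `d ≥ b_i`, and we
descend to `i`.
Each `Z_j` has `n - j ≥ n - t + 1` elements.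
-/

open Function

variable {K}

section StanleySpace

variable {σ : Type*}

lemma restrictSupport_iUnion {ι : Sort*} (A : ι → Set (σ →₀ ℕ)) :
    restrictSupport K (⋃ i, A i) = ⨆ i, restrictSupport K (A i) := by
  simp only [restrictSupport_eq_span, Set.image_iUnion, Submodule.span_iUnion]

lemma disjoint_restrictSupport {A B : Set (σ →₀ ℕ)} (h : Disjoint A B) :
    Disjoint (restrictSupport K A) (restrictSupport K B) := by
  rw [Submodule.disjoint_def]
  intro p hA hB
  rw [← support_eq_empty, ← Finset.coe_eq_empty]
  exact Set.subset_empty_iff.mp (h hA hB)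

lemma iSupIndep_restrictSupport {ι : Type*} {A : ι → Set (σ →₀ ℕ)}
    (h : Pairwise (Disjoint on A)) : iSupIndep fun i => restrictSupport K (A i) := by
  intro i
  simp_rw [← restrictSupport_iUnion]
  exact disjoint_restrictSupport (Set.disjoint_iUnion₂_right.mpr fun j hj => h (Ne.symm hj))

def stanleyExponents (b : σ →₀ ℕ) (Z : Set σ) : Set (σ →₀ ℕ) :=
  (b + ·) '' {c | ↑c.support ⊆ Z}

lemma mem_stanleyExponents {b d : σ →₀ ℕ} {Z : Set σ} :
    d ∈ stanleyExponents b Z ↔ b ≤ d ∧ ∀ k ∉ Z, d k = b k := by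
  constructor
  · rintro ⟨c, hc, rfl⟩
    refine ⟨le_self_add, fun k hk => ?_⟩
    have : c k = 0 := Finsupp.notMem_support_iff.mp fun h => hk (hc h)
    simp [this]
  · rintro ⟨hle, hout⟩
    refine ⟨d - b, fun k hk => ?_, add_tsub_cancel_of_le hle⟩
    by_contra hkZ
    simp [hout k hkZ] at hk

lemma stanleySpace_monomial (b : σ →₀ ℕ) (Z : Set σ) :
    stanleySpace K (monomial b 1) Z = restrictSupport K (stanleyExponents b Z) := by
  have hmon : monomialsIn K Z = (monomial · 1) '' {c : σ →₀ ℕ | ↑c.support ⊆ Z} := by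
    ext p
    simp [monomialsIn, eq_comm]
  rw [stanleySpace, restrictSupport_eq_span, stanleyExponents, hmon, Set.image_image,
    Set.image_image]
  simp only [monomial_mul, one_mul]

theorem isStanleyDecompOfIdeal_span_monomial {r : ℕ} (b : Fin r → σ →₀ ℕ) (Z : Fin r → Set σ)
    (hdisj : Pairwise (Disjoint on fun i => stanleyExponents (b i) (Z i)))
    (hcover : ⋃ i, stanleyExponents (b i) (Z i) = {d | ∃ i, b i ≤ d}) :
    IsStanleyDecompOfIdeal K (Ideal.span (Set.range fun i => monomial (b i) (1 : K)))
      (fun i => monomial (b i) 1) Z := by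
  refine ⟨fun i => ⟨b i, rfl⟩, fun i => Ideal.subset_span ⟨i, rfl⟩, ?_, ?_⟩
  · simp_rw [stanleySpace_monomial]
    exact iSupIndep_restrictSupport hdisj
  · simp_rw [stanleySpace_monomial]
    rw [← restrictSupport_iUnion, hcover]
    ext p
    rw [mem_restrictSupport_iff, Submodule.restrictScalars_mem,
      show (Set.range fun i => monomial (b i) (1 : K)) = (monomial · 1) '' Set.range b from
        Set.range_comp (monomial · 1) b, mem_ideal_span_monomial_image]
    simp [Set.subset_def]

end StanleySpace

section Staircase

variable {n t : ℕ} (ht : t ≤ n)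

def IsStaircase (b : Fin t → Fin n →₀ ℕ) : Prop :=
  ∀ ⦃i j : Fin t⦄, i < j →
    b i (Fin.castLE ht i) = b j (Fin.castLE ht i) + 1 ∧ ∀ k ≠ Fin.castLE ht i, b i k ≤ b j k

namespace IsStaircase

variable {ht} {b : Fin t → Fin n →₀ ℕ}

lemma pairwise_disjoint (hb : IsStaircase ht b) :
    Pairwise (Disjoint on fun j => stanleyExponents (b j) (Set.Ici (Fin.castLE ht j))) := by
  refine (pairwise_disjoint_on _).mpr fun i j hij => Set.disjoint_left.mpr fun d hi hj => ?_
  rw [mem_stanleyExponents] at hi hj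
  have hd : d (Fin.castLE ht i) = b j (Fin.castLE ht i) :=
    hj.2 _ (Set.notMem_Ici.mpr ((Fin.castLE_lt_castLE_iff ht).mpr hij))
  have hle : b i (Fin.castLE ht i) ≤ d (Fin.castLE ht i) := Finsupp.le_def.mp hi.1 _
  have := (hb hij).1
  omega

lemma iUnion_stanleyExponents (hb : IsStaircase ht b) :
    ⋃ j, stanleyExponents (b j) (Set.Ici (Fin.castLE ht j)) = {d | ∃ j, b j ≤ d} := by
  refine Set.Subset.antisymm
    (Set.iUnion_subset fun j d hd => ⟨j, (mem_stanleyExponents.mp hd).1⟩) ?_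
  rintro d ⟨j, hj⟩
  induction j using WellFoundedLT.induction with
  | ind j ih =>
  by_cases hagree : ∀ k ∉ Set.Ici (Fin.castLE ht j), d k = b j k
  · exact Set.mem_iUnion.mpr ⟨j, mem_stanleyExponents.mpr ⟨hj, hagree⟩⟩
  obtain ⟨k, hk, hne⟩ := not_forall₂.mp hagree
  rw [Set.mem_Ici, not_le] at hk
  -- the coordinate `k < j` where `d` leaves the cone of `b j` is itself a generator index
  set i : Fin t := ⟨k, (show (k : ℕ) < j from hk).trans j.isLt⟩
  have hki : Fin.castLE ht i = k := rfl
  have hij : i < j := hk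
  refine ih i hij (Finsupp.le_def.mpr fun l => ?_)
  rcases eq_or_ne l k with rfl | hl
  · have hstep := (hb hij).1
    rw [hki] at hstep
    have := Finsupp.le_def.mp hj l
    omega
  · exact ((hb hij).2 l (hki ▸ hl)).trans (Finsupp.le_def.mp hj l)

end IsStaircase

def ccExponent (a : Fin t → Fin n →₀ ℕ) (j : Fin t) : Fin n →₀ ℕ :=
  (if (j : ℕ) < t - 1 then Finsupp.single (Fin.castLE ht j) 1 else 0) + ∑ i ∈ Finset.Iic j, a i

lemma ccGens_eq_monomial {m : Fin t → MvPolynomial (Fin n) K} {a : Fin t → Fin n →₀ ℕ}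
    (hma : ∀ i, m i = monomial (a i) 1) (j : Fin t) :
    ccGens K ht m j = monomial (ccExponent ht a j) 1 := by
  simp only [ccGens, ccExponent, hma, ← monomial_sum_one]
  split_ifs <;> simp [X]

lemma isStaircase_ccExponent {a : Fin t → Fin n →₀ ℕ}
    (ha : ∀ (i : Fin t) (k : Fin n), (k : ℕ) < i → a i k = 0) :
    IsStaircase ht (ccExponent ht a) := by
  intro i j hij
  have hsub : Finset.Iic i ⊆ Finset.Iic j := Finset.Iic_subset_Iic.mpr hij.le
  have hsum_le : ∑ l ∈ Finset.Iic i, a l ≤ ∑ l ∈ Finset.Iic j, a l :=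
    Finset.sum_le_sum_of_subset hsub
  have hsum_eq : (∑ l ∈ Finset.Iic j, a l) (Fin.castLE ht i)
      = (∑ l ∈ Finset.Iic i, a l) (Fin.castLE ht i) := by
    rw [← Finset.sum_sdiff hsub, Finsupp.add_apply, Finsupp.finsetSum_apply,
      Finset.sum_eq_zero, zero_add]
    intro l hl
    simp only [Finset.mem_sdiff, Finset.mem_Iic, not_le] at hl
    exact ha l _ hl.2
  have hi : (i : ℕ) < t - 1 := by omega
  have hij' : Fin.castLE ht j ≠ Fin.castLE ht i := (Fin.castLE_injective ht).ne hij.ne'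
  refine ⟨?_, fun k hk => ?_⟩
  · simp only [ccExponent, if_pos hi, Finsupp.add_apply, Finsupp.single_eq_same, hsum_eq]
    split_ifs <;> simp [hij', add_comm]
  · simp only [ccExponent, if_pos hi, Finsupp.add_apply, Finsupp.single_apply, hk.symm,
      if_false, zero_add]
    exact (Finsupp.le_def.mp hsum_le k).trans le_add_self

end Staircase

/-- For a canonical critical monomial ideal `I = I_{(m₁,…,m_t)} ⊆ S`,
there is a Stanley decomposition of `I` all of whose sets `Z i` have at least
`n - t + 1` elements; i.e. `sdepth I ≥ n - t + 1 = 1 + sdepth (S/I)`. -/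
theorem sdepth_ideal_canonical_critical_ge
    {K : Type*} [Field K] {n t : ℕ} (ht : t ≤ n)
    (m : Fin t → MvPolynomial (Fin n) K)
    (hm : ∀ i : Fin t, ∃ a : Fin n →₀ ℕ,
      ↑a.support ⊆ {k : Fin n | (i : ℕ) ≤ (k : ℕ)} ∧ m i = monomial a 1)
    (I : Ideal (MvPolynomial (Fin n) K))
    (hI : I = Ideal.span (Set.range (ccGens K ht m))) :
    ∃ (r : ℕ) (u : Fin r → MvPolynomial (Fin n) K) (Z : Fin r → Set (Fin n)),
      IsStanleyDecompOfIdeal K I u Z ∧ ∀ i, n - t + 1 ≤ (Z i).ncard := by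
  choose a ha hma using hm
  have hvanish : ∀ (i : Fin t) (k : Fin n), (k : ℕ) < i → a i k = 0 := fun i k hk =>
    Finsupp.notMem_support_iff.mp fun hk' => (not_le.mpr hk) (ha i hk')
  have hstair := isStaircase_ccExponent ht hvanish
  refine ⟨t, fun j => monomial (ccExponent ht a j) 1, fun j => Set.Ici (Fin.castLE ht j), ?_,
    fun j => ?_⟩
  · rw [hI, show ccGens K ht m = _ from funext (ccGens_eq_monomial ht hma)]
    exact isStanleyDecompOfIdeal_span_monomial _ _ hstair.pairwise_disjoint
      hstair.iUnion_stanleyExponents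
  · dsimp only
    rw [← Finset.coe_Ici, Set.ncard_coe_finset, Fin.card_Ici, Fin.val_castLE]
    omega
end
end

section
/- Let m_1,…,m_t be monomials with m_i ∈ S_i = K[x_i,…,x_n] for each i and deg m_t > 0, where 1 ≤ t ≤ n. Then, as K-vector spaces, S = ⊕_{i=1}^{t} ⊕_{j=1}^{d_i} u_{ij} n_i K[Z_{ij}] ⊕ ⊕_{j=1}^{t−1} x_j n_{j+1} S_j ⊕ n_t m_t S_t, an internal direct sum of K-subspaces of S, where for a monomial u the set u S_j = {u f : f ∈ S_j}. -/
/-!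
All summands are spanned by monomials, so it suffices to show that their exponent sets partition
`ℕⁿ`. The exponent set of `x^e K[Z]` is the cone `e + ℕ^Z`. Inside the cone of `n_i S_i`, a
monomial either is divisible by `n_i m_i = n_{i+1}`, or it lies in exactly one staircase cone
`u_{ij} n_i K[Z_{ij}]`, `j` being the first variable of `m_i` (listed increasingly, with
multiplicity) that it runs out of. The cone of `n_{i+1} S_i` splits, according to whether the
exponent of `x_i` exceeds that of `n_{i+1}`, into those of `x_i n_{i+1} S_i` and `n_{i+1} S_{i+1}`.
Descending from `S = n_1 S_1` to `n_t m_t S_t`, the summand containing a monomial sits at the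
largest `i` with the monomial in `n_i S_i`.
-/

open MvPolynomial

noncomputable section

variable (K : Type*) [Field K]

/-- The variables (with multiplicity, in increasing order) of the monomial with exponent
vector `a`; its `j`-th entry (0-indexed) is the variable `v(w_{j+1})` of the paper. -/
def varList {n : ℕ} (a : Fin n →₀ ℕ) : List (Fin n) :=
  (Finsupp.toMultiset a).sort (· ≤ ·)

/-- `u_{j+1}` : the product of the first `j` variables (with multiplicity, in increasing
order) of the monomial with exponent vector `a`; `u_1 = 1`. -/
def uPoly (K : Type*) [Field K] {n : ℕ} (a : Fin n →₀ ℕ) (j : ℕ) : MvPolynomial (Fin n) K :=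
  (((varList a).take j).map X).prod

/-- `Z_{i,j+1} = {x_i,…,x_n} \ {x_{v(w_{i,j+1})}}` (0-indexed in `i` and `j`),
for the monomial `m_i` with exponent vector `a`. -/
def Zij {n : ℕ} (i : ℕ) (a : Fin n →₀ ℕ) (j : Fin (varList a).length) : Set (Fin n) :=
  {k : Fin n | i ≤ (k : ℕ)} \ {(varList a).get j}


section SpanOfBasisPieces

open Function

variable {R M ι κ : Type*} [Ring R] [AddCommGroup M] [Module R M] {v : κ → M}
  {B : ι → Set κ}

theorem LinearIndependent.iSupIndep_span_image (hv : LinearIndependent R v)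
    (hB : Pairwise (Disjoint on B)) : iSupIndep fun o => Submodule.span R (v '' B o) := by
  intro o
  rw [← Submodule.span_iUnion₂, ← Set.image_iUnion₂]
  exact hv.disjoint_span_image (Set.disjoint_iUnion₂_right.2 fun _ hj => hB hj.symm)

theorem Submodule.iSup_span_image_eq_top (hv : Submodule.span R (Set.range v) = ⊤)
    (hB : ⋃ o, B o = Set.univ) : ⨆ o, Submodule.span R (v '' B o) = ⊤ := by
  rw [← Submodule.span_iUnion, ← Set.image_iUnion, hB, Set.image_univ, hv]

end SpanOfBasisPieces

namespace StanleyDecomposition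

open Finsupp

section Cone

variable {σ : Type*} {e b d : σ →₀ ℕ} {Z T : Set σ} {x : σ}

/-- The exponent vectors of the monomials spanning `x^e K[Z]`. -/
def cone (e : σ →₀ ℕ) (Z : Set σ) : Set (σ →₀ ℕ) :=
  (e + ·) '' {c | ↑c.support ⊆ Z}

theorem mem_cone_iff : b ∈ cone e Z ↔ e ≤ b ∧ ∀ x ∉ Z, b x = e x := by
  constructor
  · rintro ⟨c, hc, rfl⟩
    refine ⟨le_self_add, fun x hx => ?_⟩
    have : c x = 0 := notMem_support_iff.1 fun h => hx (hc h)
    simp [this]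
  · rintro ⟨hle, heq⟩
    refine ⟨b - e, fun x hx => ?_, add_tsub_cancel_of_le hle⟩
    by_contra hxZ
    simp [heq x hxZ] at hx

theorem le_of_mem_cone (hb : b ∈ cone e Z) : e ≤ b :=
  (mem_cone_iff.1 hb).1

theorem cone_zero_univ : cone (0 : σ →₀ ℕ) Set.univ = Set.univ :=
  Set.eq_univ_of_forall fun _ => mem_cone_iff.2 ⟨zero_le, fun _ hx => absurd trivial hx⟩

theorem cone_add_subset (hd : ↑d.support ⊆ Z) (hT : T ⊆ Z) : cone (e + d) T ⊆ cone e Z := by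
  classical
  rintro _ ⟨c, hc, rfl⟩
  refine ⟨d + c, fun x hx => ?_, (add_assoc e d c).symm⟩
  rcases Finset.mem_union.1 (Finsupp.support_add hx) with h | h
  exacts [hd h, hT (hc h)]

theorem mem_cone_add (hb : b ∈ cone e T) (hd : ↑d.support ⊆ T) (hle : e + d ≤ b) :
    b ∈ cone (e + d) T := by
  refine mem_cone_iff.2 ⟨hle, fun x hx => ?_⟩
  have : d x = 0 := notMem_support_iff.1 fun h => hx (hd h)
  simp [(mem_cone_iff.1 hb).2 x hx, this]

theorem add_single_le_iff (hle : e ≤ b) : e + single x 1 ≤ b ↔ e x < b x := by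
  classical
  constructor
  · intro h
    simpa using h x
  · intro h y
    by_cases hy : x = y
    · subst hy; simpa using h
    · simpa [single_apply, hy] using hle y

theorem mem_cone_diff_singleton (hb : b ∈ cone e T) (h : ¬e + single x 1 ≤ b) :
    b ∈ cone e (T \ {x}) := by
  obtain ⟨hle, heq⟩ := mem_cone_iff.1 hb
  refine mem_cone_iff.2 ⟨hle, fun y hy => ?_⟩
  by_cases hyT : y ∈ T
  · obtain rfl : y = x := by simpa [hyT] using hy
    rw [add_single_le_iff hle] at h
    exact le_antisymm (not_lt.1 h) (hle y)
  · exact heq y hyT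

theorem not_add_single_le_of_mem_cone_diff (hb : b ∈ cone e (T \ {x})) :
    ¬e + single x 1 ≤ b := by
  obtain ⟨hle, heq⟩ := mem_cone_iff.1 hb
  rw [add_single_le_iff hle, heq x (by simp)]
  exact lt_irrefl _

end Cone

section Staircase

variable {σ : Type*} [DecidableEq σ]

def listExp (L : List σ) : σ →₀ ℕ :=
  Multiset.toFinsupp (L : Multiset σ)

theorem listExp_apply (L : List σ) (x : σ) : listExp L x = L.count x := by
  simp [listExp]

theorem support_listExp_subset (L : List σ) : ↑(listExp L).support ⊆ {x | x ∈ L} := by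
  intro x hx
  simpa [listExp] using hx

theorem listExp_take_succ (L : List σ) {j : ℕ} (hj : j < L.length) :
    listExp (L.take (j + 1)) = listExp (L.take j) + single L[j] 1 := by
  rw [listExp, List.take_add_one, List.getElem?_eq_getElem hj, Option.toList_some,
    ← Multiset.coe_add, Multiset.toFinsupp_add, Multiset.coe_singleton,
    Multiset.toFinsupp_singleton, listExp]

theorem listExp_take_mono (L : List σ) {j j' : ℕ} (h : j ≤ j') :
    listExp (L.take j) ≤ listExp (L.take j') := by
  intro x
  rw [listExp_apply, listExp_apply]
  exact (List.take_sublist_take_left h).count_le x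

variable {e b : σ →₀ ℕ} {T : Set σ}

theorem exists_mem_cone_stair {L : List σ} (hL : ∀ x ∈ L, x ∈ T) (hb : b ∈ cone e T)
    (hbL : ¬e + listExp L ≤ b) :
    ∃ j : Fin L.length, b ∈ cone (e + listExp (L.take j)) (T \ {L[(j : ℕ)]}) := by
  classical
  let P : ℕ → Prop := fun j => e + listExp (L.take j) ≤ b
  set j := Nat.findGreatest P L.length
  have hPj : P j :=
    Nat.findGreatest_spec (P := P) (Nat.zero_le _) (by simpa [P, listExp] using le_of_mem_cone hb)
  have hj : j < L.length := by
    refine lt_of_le_of_ne (Nat.findGreatest_le _) fun h => hbL ?_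
    simpa [P, h] using hPj
  have hPj1 : ¬P (j + 1) := Nat.findGreatest_is_greatest (Nat.lt_succ_self j) hj
  refine ⟨⟨j, hj⟩, mem_cone_diff_singleton ?_ ?_⟩
  · exact mem_cone_add hb
      ((support_listExp_subset _).trans fun x hx => hL x (List.mem_of_mem_take hx)) hPj
  · simpa [P, listExp_take_succ L hj, add_assoc] using hPj1

theorem not_le_of_mem_cone_stair {L : List σ} {j : Fin L.length} {j' : ℕ}
    (hb : b ∈ cone (e + listExp (L.take j)) (T \ {L[(j : ℕ)]})) (hj : (j : ℕ) < j') :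
    ¬e + listExp (L.take j') ≤ b := fun h =>
  not_add_single_le_of_mem_cone_diff hb <| by
    rw [add_assoc, ← listExp_take_succ L j.isLt]
    exact le_trans (add_le_add_right (listExp_take_mono L hj) e) h

end Staircase

section Monomials

variable {σ : Type*}

theorem image_mul_monomialsIn (e : σ →₀ ℕ) (Z : Set σ) :
    (monomial e (1 : K) * ·) '' monomialsIn K Z = (monomial · 1) '' cone e Z := by
  ext p
  simp only [monomialsIn, cone, Set.mem_image, Set.mem_ofPred_eq]
  constructor
  · rintro ⟨q, ⟨c, hc, rfl⟩, rfl⟩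
    exact ⟨e + c, ⟨c, hc, rfl⟩, by rw [monomial_mul, mul_one]⟩
  · rintro ⟨b, ⟨c, hc, rfl⟩, rfl⟩
    exact ⟨monomial c 1, ⟨c, hc, rfl⟩, by rw [monomial_mul, mul_one]⟩

theorem stanleySpace_monomial (e : σ →₀ ℕ) (Z : Set σ) :
    stanleySpace K (monomial e 1) Z = Submodule.span K ((monomial · 1) '' cone e Z) := by
  rw [stanleySpace, image_mul_monomialsIn]

theorem map_mulLeft_span_monomialsIn (e : σ →₀ ℕ) (Z : Set σ) :
    (Submodule.span K (monomialsIn K Z)).map (LinearMap.mulLeft K (monomial e 1)) =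
      Submodule.span K ((monomial · 1) '' cone e Z) := by
  rw [Submodule.map_span, ← image_mul_monomialsIn]
  rfl

theorem list_prod_map_X [DecidableEq σ] (L : List σ) :
    (L.map X).prod = monomial (listExp L) (1 : K) := by
  induction L with
  | nil => simp [listExp]
  | cons x L ih =>
    rw [List.map_cons, List.prod_cons, ih, X, monomial_mul, one_mul, listExp, listExp,
      ← Multiset.cons_coe, ← Multiset.singleton_add, Multiset.toFinsupp_add,
      Multiset.toFinsupp_singleton]

theorem listExp_varList {n : ℕ} (a : Fin n →₀ ℕ) : listExp (varList a) = a := by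
  simp [listExp, varList]

theorem mem_varList {n : ℕ} {a : Fin n →₀ ℕ} {x : Fin n} :
    x ∈ varList a ↔ x ∈ a.support := by
  simp [varList]

theorem uPoly_eq_monomial {n : ℕ} (a : Fin n →₀ ℕ) (j : ℕ) :
    uPoly K a j = monomial (listExp ((varList a).take j)) 1 :=
  list_prod_map_X K _

end Monomials

section Levels

variable {n t : ℕ} (a : Fin t → Fin n →₀ ℕ)

def upper (i : ℕ) : Set (Fin n) := {k | i ≤ (k : ℕ)}

/-- The exponent vector of `n_{i+1} = m_1 ⋯ m_i` in the paper's 1-indexed notation. -/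
def headExp (i : ℕ) : Fin n →₀ ℕ :=
  ∑ k ∈ Finset.univ.filter (fun k : Fin t => (k : ℕ) < i), a k

theorem headExp_zero : headExp a 0 = 0 := by
  simp [headExp]

theorem headExp_eq_sum_Iio (i : Fin t) : headExp a i = ∑ k ∈ Finset.Iio i, a k := by
  unfold headExp
  congr 1
  ext k
  simp only [Finset.mem_filter, Finset.mem_univ, true_and, Finset.mem_Iio, Fin.lt_def]

theorem headExp_succ_eq_sum_Iic (i : Fin t) : headExp a (i + 1) = ∑ k ∈ Finset.Iic i, a k := by
  unfold headExp
  congr 1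
  ext k
  simp only [Finset.mem_filter, Finset.mem_univ, true_and, Finset.mem_Iic, Fin.le_def,
    Nat.lt_succ_iff]

theorem headExp_succ (i : Fin t) : headExp a (i + 1) = headExp a i + a i := by
  rw [headExp_succ_eq_sum_Iic, headExp_eq_sum_Iio, ← Finset.Iio_insert,
    Finset.sum_insert Finset.notMem_Iio_self, add_comm]

theorem prod_Iio_monomial (i : Fin t) :
    ∏ k ∈ Finset.Iio i, monomial (a k) (1 : K) = monomial (headExp a i) 1 := by
  rw [headExp_eq_sum_Iio, monomial_sum_one]

theorem ccGens_monomial (ht : t ≤ n) (j : Fin t) :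
    ccGens K ht (fun i => monomial (a i) 1) j =
      monomial
        ((if (j : ℕ) < t - 1 then single (Fin.castLE ht j) 1 else 0) + headExp a (j + 1)) 1 := by
  rw [ccGens, ← monomial_sum_one, ← headExp_succ_eq_sum_Iic]
  split_ifs <;> simp [X, monomial_mul]

/-- The exponent set of `n_{i+1} S_{i+1}` in the paper's 1-indexed notation. -/
def levelCone (i : ℕ) : Set (Fin n →₀ ℕ) :=
  cone (headExp a i) (upper i)

variable {a}

theorem levelCone_zero : levelCone a 0 = Set.univ := by
  rw [levelCone, headExp_zero, ← cone_zero_univ]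
  congr
  exact Set.eq_univ_of_forall fun k => Nat.zero_le k

theorem levelCone_succ_subset (hm : ∀ i : Fin t, ↑(a i).support ⊆ upper (n := n) i)
    (i : Fin t) : levelCone a (i + 1) ⊆ levelCone a i := by
  rw [levelCone, headExp_succ]
  exact cone_add_subset (hm i) fun k hk => Nat.le_of_succ_le hk

theorem levelCone_antitone (hm : ∀ i : Fin t, ↑(a i).support ⊆ upper (n := n) i) {i i' : ℕ}
    (h : i ≤ i') (h' : i' ≤ t) : levelCone a i' ⊆ levelCone a i := by
  induction i', h using Nat.le_induction with
  | base => exact subset_rfl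
  | succ k _ ih => exact (levelCone_succ_subset hm ⟨k, by omega⟩).trans (ih (by omega))

theorem upper_succ_eq_diff (ht : t ≤ n) (j : Fin t) :
    upper (n := n) (j + 1) = upper j \ {Fin.castLE ht j} := by
  ext k
  simp only [upper, Set.mem_sdiff, Set.mem_ofPred_eq, Set.mem_singleton_iff, Fin.ext_iff,
    Fin.val_castLE]
  omega

theorem support_single_castLE_subset (ht : t ≤ n) (j : Fin t) :
    ↑(single (Fin.castLE ht j) 1).support ⊆ upper (n := n) j :=
  (Finset.coe_subset.2 support_single_subset).trans (by simp [upper])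

variable (a) in
abbrev SummandIndex := ((i : Fin t) × Fin (varList (a i)).length) ⊕ Fin t

def level : SummandIndex a → ℕ
  | .inl p => p.1
  | .inr j => j

theorem level_lt : ∀ o : SummandIndex a, level o < t
  | .inl p => p.1.isLt
  | .inr j => j.isLt

variable (a) in
def summandExps (ht : t ≤ n) : SummandIndex a → Set (Fin n →₀ ℕ)
  | .inl p => cone (headExp a p.1 + listExp ((varList (a p.1)).take p.2)) (Zij p.1 (a p.1) p.2)
  | .inr j =>
    cone ((if (j : ℕ) < t - 1 then single (Fin.castLE ht j) 1 else 0) + headExp a (j + 1))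
      (upper j)

variable {ht : t ≤ n} {b : Fin n →₀ ℕ}

theorem not_headExp_succ_le_of_mem_inl {i : Fin t} {j : Fin (varList (a i)).length}
    (hb : b ∈ summandExps a ht (.inl ⟨i, j⟩)) : ¬headExp a (i + 1) ≤ b := by
  have := not_le_of_mem_cone_stair (j' := (varList (a i)).length) hb j.isLt
  rwa [List.take_length, listExp_varList, ← headExp_succ] at this

theorem headExp_succ_le_of_mem_inr {j : Fin t} (hb : b ∈ summandExps a ht (.inr j)) :
    headExp a (j + 1) ≤ b :=
  le_trans le_add_self (le_of_mem_cone hb)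

theorem summandExps_subset_levelCone (hm : ∀ i : Fin t, ↑(a i).support ⊆ upper (n := n) i) :
    ∀ o, summandExps a ht o ⊆ levelCone a (level o)
  | .inl ⟨i, _⟩ => cone_add_subset ((support_listExp_subset _).trans fun _ hx =>
      hm i (mem_varList.1 (List.mem_of_mem_take hx))) Set.sdiff_subset
  | .inr j => by
    have hsupp : ↑(if (j : ℕ) < t - 1 then single (Fin.castLE ht j) 1 else 0).support ⊆
        upper (n := n) j := by
      split_ifs
      exacts [support_single_castLE_subset ht j, by simp]
    refine (add_comm (headExp a (j + 1)) _ ▸ cone_add_subset hsupp subset_rfl).trans ?_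
    rw [headExp_succ]
    exact cone_add_subset (hm j) subset_rfl

theorem notMem_levelCone_succ {o : SummandIndex a} (hb : b ∈ summandExps a ht o)
    (ho : level o + 1 < t) : b ∉ levelCone a (level o + 1) := by
  rcases o with ⟨i, j⟩ | j
  · exact fun h => not_headExp_succ_le_of_mem_inl hb (le_of_mem_cone h)
  · intro h
    rw [levelCone, level, upper_succ_eq_diff ht] at h
    have hlt : (j : ℕ) < t - 1 := by simp only [level] at ho; omega
    refine not_add_single_le_of_mem_cone_diff h ?_
    have := le_of_mem_cone hb
    rwa [if_pos hlt, add_comm] at this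

open Classical in
theorem level_eq_findGreatest (hm : ∀ i : Fin t, ↑(a i).support ⊆ upper (n := n) i)
    {o : SummandIndex a} (hb : b ∈ summandExps a ht o) :
    level o = Nat.findGreatest (b ∈ levelCone a ·) (t - 1) := by
  have hlt := level_lt o
  refine le_antisymm (Nat.le_findGreatest (by omega) (summandExps_subset_levelCone hm o hb)) ?_
  by_contra! h
  have hle := Nat.findGreatest_le (P := (b ∈ levelCone a ·)) (t - 1)
  have hne : Nat.findGreatest (b ∈ levelCone a ·) (t - 1) ≠ 0 := by omega
  exact notMem_levelCone_succ hb (by omega) <| levelCone_antitone hm h (by omega)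
    (Nat.findGreatest_of_ne_zero rfl hne)

theorem exists_mem_summandExps (hm : ∀ i : Fin t, ↑(a i).support ⊆ upper (n := n) i)
    (ht1 : 1 ≤ t) (b : Fin n →₀ ℕ) : ∃ o, b ∈ summandExps a ht o := by
  classical
  set i0 := Nat.findGreatest (b ∈ levelCone a ·) (t - 1)
  have hb : b ∈ levelCone a i0 :=
    Nat.findGreatest_spec (P := (b ∈ levelCone a ·)) (Nat.zero_le _) (by simp [levelCone_zero])
  have hi0 : i0 < t := by have := Nat.findGreatest_le (P := (b ∈ levelCone a ·)) (t - 1); omega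
  let i : Fin t := ⟨i0, hi0⟩
  by_cases hdiv : headExp a (i + 1) ≤ b
  · have hb' : b ∈ cone (headExp a (i + 1)) (upper i) := by
      rw [headExp_succ] at hdiv ⊢
      exact mem_cone_add hb (hm i) hdiv
    refine ⟨.inr i, ?_⟩
    show b ∈ cone (_ + _) _
    by_cases hlast : (i : ℕ) < t - 1
    · rw [if_pos hlast, add_comm]
      refine mem_cone_add hb' (support_single_castLE_subset ht i) ?_
      by_contra h
      have hmax : b ∉ levelCone a (i + 1) :=
        Nat.findGreatest_is_greatest (Nat.lt_succ_self i0) hlast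
      rw [levelCone, upper_succ_eq_diff ht i] at hmax
      exact hmax (mem_cone_diff_singleton hb' h)
    · rwa [if_neg hlast, zero_add]
  · rw [headExp_succ, ← listExp_varList (a i)] at hdiv
    obtain ⟨j, hj⟩ := exists_mem_cone_stair (fun x hx => hm i (mem_varList.1 hx)) hb hdiv
    exact ⟨.inl ⟨i, j⟩, hj⟩

open Function in
theorem pairwise_disjoint_summandExps (hm : ∀ i : Fin t, ↑(a i).support ⊆ upper (n := n) i) :
    Pairwise (Disjoint on summandExps a ht) := by
  intro o o' hne
  refine Set.disjoint_left.2 fun b hb hb' => hne ?_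
  have hlevel := (level_eq_findGreatest hm hb).trans (level_eq_findGreatest hm hb').symm
  rcases o with ⟨i, j⟩ | j <;> rcases o' with ⟨i', j'⟩ | j'
  · obtain rfl : i = i' := Fin.ext hlevel
    rcases lt_trichotomy j j' with h | rfl | h
    · exact absurd (le_of_mem_cone hb') (not_le_of_mem_cone_stair hb h)
    · rfl
    · exact absurd (le_of_mem_cone hb) (not_le_of_mem_cone_stair hb' h)
  · obtain rfl : i = j' := Fin.ext hlevel
    exact absurd (headExp_succ_le_of_mem_inr hb') (not_headExp_succ_le_of_mem_inl hb)
  · obtain rfl : j = i' := Fin.ext hlevel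
    exact absurd (headExp_succ_le_of_mem_inr hb) (not_headExp_succ_le_of_mem_inl hb')
  · exact congrArg _ (Fin.ext hlevel)

end Levels

end StanleyDecomposition

open StanleyDecomposition in
/-- For monomials `m_i = monomial (a i) 1 ∈ S_i = K[x_i,…,x_n]`,
`1 ≤ i ≤ t ≤ n`, with `deg m_t > 0`, one has, as internal direct sum of
`K`-subspaces of `S`:
`S = ⊕_{i=1}^{t} ⊕_{j=1}^{d_i} u_{ij} n_i K[Z_{ij}] ⊕ ⊕_{j=1}^{t-1} x_j n_{j+1} S_j ⊕ n_t m_t S_t`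
(the summands of the last two blocks are `(ccGens j)·S_j`, `j = 1,…,t`, since
`ccGens j = x_j n_{j+1}` for `j < t` and `ccGens t = n_t m_t`, `S_t = K[x_t,…,x_n]`). -/
theorem full_polynomial_ring_decomposition
    {K : Type*} [Field K] {n t : ℕ} (ht1 : 1 ≤ t) (ht : t ≤ n)
    (a : Fin t → (Fin n →₀ ℕ))
    (hm : ∀ i : Fin t, ↑(a i).support ⊆ {k : Fin n | (i : ℕ) ≤ (k : ℕ)}) :
    -- `n_i = m₁ ⋯ m_{i-1}` (so `n_1 = 1`) :
    let nP : Fin t → MvPolynomial (Fin n) K := fun i => ∏ k ∈ Finset.Iio i, monomial (a k) 1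
    -- `S_j = K[x_j,…,x_n]` as a `K`-subspace of `S` :
    let Si : ℕ → Submodule K (MvPolynomial (Fin n) K) := fun j =>
      Submodule.span K (monomialsIn K {k : Fin n | j ≤ (k : ℕ)})
    -- the summands :
    let F : ((i : Fin t) × Fin (varList (a i)).length) ⊕ (Fin t) →
        Submodule K (MvPolynomial (Fin n) K) := fun o =>
      Sum.elim
        (fun p => stanleySpace K (nP p.1 * uPoly K (a p.1) p.2) (Zij (p.1 : ℕ) (a p.1) p.2))
        (fun j => Submodule.map
          (LinearMap.mulLeft K (ccGens K ht (fun i => monomial (a i) 1) j)) (Si (j : ℕ))) o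
    iSupIndep F ∧ iSup F = ⊤ := by
  intro nP Si F
  have hF : F = fun o => Submodule.span K ((monomial · 1) '' summandExps a ht o) := by
    funext o
    rcases o with ⟨i, j⟩ | j
    · show stanleySpace K ((∏ k ∈ Finset.Iio i, monomial (a k) 1) * uPoly K (a i) j) _ = _
      rw [prod_Iio_monomial, uPoly_eq_monomial, monomial_mul, one_mul, stanleySpace_monomial]
      rfl
    · show Submodule.map (LinearMap.mulLeft K (ccGens K ht _ j))
        (Submodule.span K (monomialsIn K (upper j))) = _
      rw [ccGens_monomial, map_mulLeft_span_monomialsIn]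
      rfl
  rw [hF]
  exact ⟨(basisMonomials (Fin n) K).linearIndependent.iSupIndep_span_image
      (pairwise_disjoint_summandExps hm),
    Submodule.iSup_span_image_eq_top (basisMonomials (Fin n) K).span_eq
      (Set.iUnion_eq_univ_iff.2 (exists_mem_summandExps hm ht1))⟩
end
end

section
/- Let K be an infinite field, let I ⊆ S be a monomial ideal that is not critical, and set b = depth(S/I). Let J be a graded ideal of S' = K[x_1,…,x_{n−b}] such that the extended ideal JS of S satisfies H_{S/JS} = H_{S/I}. Then J is not critical in S': there is no universal lexsegment ideal L' ⊆ S' with H_{S'/L'} = H_{S'/J}. -/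
open MvPolynomial

noncomputable section

variable (K : Type*) [Field K]

/-- `(u, Z)` is a Stanley decomposition of `S/I`:
`S = I ⊕ (⊕ i, u i K[Z i])` as `K`-vector spaces, with each `u i` a monomial. -/
def IsStanleyDecompOfQuot {σ : Type*} (I : Ideal (MvPolynomial σ K)) {r : ℕ}
    (u : Fin r → MvPolynomial σ K) (Z : Fin r → Set σ) : Prop :=
  (∀ i, ∃ a : σ →₀ ℕ, u i = monomial a 1) ∧
  iSupIndep (fun o : Option (Fin r) =>
    Option.elim o (Submodule.restrictScalars K I) fun i => stanleySpace K (u i) (Z i)) ∧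
  (⨆ o : Option (Fin r),
    Option.elim o (Submodule.restrictScalars K I) fun i => stanleySpace K (u i) (Z i)) = ⊤

/-- A monomial ideal : an ideal generated by a set of monomials. -/
def IsMonomialIdeal {σ : Type*} (I : Ideal (MvPolynomial σ K)) : Prop :=
  ∃ G : Set (σ →₀ ℕ), I = Ideal.span ((fun a => monomial a (1 : K)) '' G)

/-- `b >_lex a` for exponent vectors, in the lexicographic order induced by
`x₁ > x₂ > … > x_n`. -/
def lexLT {n : ℕ} (a b : Fin n →₀ ℕ) : Prop :=
  ∃ k : Fin n, a k < b k ∧ ∀ l : Fin n, l < k → a l = b l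

/-- A lexsegment ideal : a monomial ideal closed under passing, in each degree, to
lexicographically larger monomials. -/
def IsLexsegmentIdeal {n : ℕ} (L : Ideal (MvPolynomial (Fin n) K)) : Prop :=
  IsMonomialIdeal K L ∧
  ∀ a b : Fin n →₀ ℕ, monomial a (1 : K) ∈ L →
    (a.sum fun _ e => e) = (b.sum fun _ e => e) → lexLT a b → monomial b (1 : K) ∈ L

/-- A universal lexsegment ideal : one whose extension to `K[x₁,…,x_{n+m}]` is a
lexsegment ideal for every `m ≥ 0`. -/
def IsUniversalLexsegment {n : ℕ} (L : Ideal (MvPolynomial (Fin n) K)) : Prop :=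
  IsLexsegmentIdeal K L ∧
  ∀ m : ℕ, IsLexsegmentIdeal K
    (Ideal.map (rename (Fin.castAdd m) : MvPolynomial (Fin n) K →ₐ[K] MvPolynomial (Fin (n + m)) K) L)

/-- The Hilbert function of `S/I` : `d ↦ dim_K (S/I)_d`, the dimension of the image of the
degree-`d` homogeneous component of `S` in `S/I`. -/
def hilbertFn {σ : Type*} (I : Ideal (MvPolynomial σ K)) (d : ℕ) : ℕ :=
  Module.finrank K
    (Submodule.map (Ideal.Quotient.mkₐ K I).toLinearMap (homogeneousSubmodule σ K d))

/-- An ideal `I` is critical if there is a universal lexsegment ideal `L` with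
`H_{S/L} = H_{S/I}`. -/
def IsCritical {n : ℕ} (I : Ideal (MvPolynomial (Fin n) K)) : Prop :=
  ∃ L : Ideal (MvPolynomial (Fin n) K),
    IsUniversalLexsegment K L ∧ ∀ d : ℕ, hilbertFn K L d = hilbertFn K I d


/-- The depth of `S/I` : the largest length of a sequence of homogeneous elements of `S`
of positive degree which is a regular sequence on `S/I`. -/
def depthQuot {n : ℕ} (I : Ideal (MvPolynomial (Fin n) K)) : ℕ :=
  sSup {r | ∃ θ : Fin r → MvPolynomial (Fin n) K,
    (∀ i, ∃ e : ℕ, 0 < e ∧ (θ i).IsHomogeneous e) ∧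
    RingTheory.Sequence.IsRegular (MvPolynomial (Fin n) K ⧸ I) (List.ofFn θ)}

/-!
Were `J` critical, with universal lexsegment ideal `L'`, then `L'S` would show that `I` is
critical. Indeed `L'S` is again a universal lexsegment ideal, and extension to more variables
preserves equality of Hilbert functions: in `R[y₁, …, y_m]` the degree-`d` part of `A·R[y]` is
`⊕_{|w| ≤ d} A_{d-|w|} y^w`, so its dimension depends only on the Hilbert function of `R/A`.
-/

variable {K}

instance {σ : Type*} [Finite σ] (d : ℕ) : FiniteDimensional K (homogeneousSubmodule σ K d) :=
  (Submodule.fg_iff_finiteDimensional _).mp (homogeneousSubmodule_fg σ K d)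

namespace Ideal

variable {σ : Type*}

def homogeneousPart (A : Ideal (MvPolynomial σ K)) (d : ℕ) : Submodule K (MvPolynomial σ K) :=
  A.restrictScalars K ⊓ homogeneousSubmodule σ K d

theorem mem_homogeneousPart {A : Ideal (MvPolynomial σ K)} {d : ℕ} {p : MvPolynomial σ K} :
    p ∈ A.homogeneousPart d ↔ p ∈ A ∧ p.IsHomogeneous d :=
  Iff.rfl

instance [Finite σ] (A : Ideal (MvPolynomial σ K)) (d : ℕ) :
    FiniteDimensional K (A.homogeneousPart d) :=
  Submodule.finiteDimensional_of_le inf_le_right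

end Ideal

section HilbertFunction

variable {σ τ : Type*}

theorem hilbertFn_add_finrank_homogeneousPart [Finite σ] (A : Ideal (MvPolynomial σ K))
    (d : ℕ) :
    hilbertFn K A d + Module.finrank K (A.homogeneousPart d) =
      Module.finrank K (homogeneousSubmodule σ K d) := by
  have hrank := LinearMap.finrank_range_add_finrank_ker
    ((Ideal.Quotient.mkₐ K A).toLinearMap.domRestrict (homogeneousSubmodule σ K d))
  have hker : LinearMap.ker (Ideal.Quotient.mkₐ K A).toLinearMap = A.restrictScalars K := by
    ext p
    simp [Ideal.Quotient.eq_zero_iff_mem]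
  have hpart : (A.restrictScalars K).comap (homogeneousSubmodule σ K d).subtype =
      (A.homogeneousPart d).comap (homogeneousSubmodule σ K d).subtype := by
    rw [Ideal.homogeneousPart, Submodule.comap_inf, Submodule.comap_subtype_self, inf_top_eq]
  have hle : A.homogeneousPart d ≤ homogeneousSubmodule σ K d := inf_le_right
  rwa [LinearMap.range_domRestrict, LinearMap.ker_domRestrict, hker, hpart,
    (Submodule.comapSubtypeEquivOfLe hle).finrank_eq] at hrank

theorem hilbertFn_eq_iff_finrank_homogeneousPart_eq [Finite σ] {A B : Ideal (MvPolynomial σ K)}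
    {d : ℕ} : hilbertFn K A d = hilbertFn K B d ↔
      Module.finrank K (A.homogeneousPart d) = Module.finrank K (B.homogeneousPart d) := by
  have hA := hilbertFn_add_finrank_homogeneousPart A d
  have hB := hilbertFn_add_finrank_homogeneousPart B d
  omega

theorem homogeneousSubmodule_map_rename_equiv (e : σ ≃ τ) (d : ℕ) :
    (homogeneousSubmodule σ K d).map (rename e).toLinearMap = homogeneousSubmodule τ K d := by
  refine le_antisymm (Submodule.map_le_iff_le_comap.mpr fun p hp => hp.rename_isHomogeneous) ?_
  intro p hp
  refine ⟨rename e.symm p, hp.rename_isHomogeneous, ?_⟩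
  simp [rename_rename]

theorem hilbertFn_map_rename_equiv (e : σ ≃ τ) (A : Ideal (MvPolynomial σ K)) (d : ℕ) :
    hilbertFn K (A.map (rename e : MvPolynomial σ K →ₐ[K] _)) d = hilbertFn K A d := by
  let φ := Ideal.quotientEquivAlg A (A.map (rename e)) (renameEquiv K e) rfl
  have hφ : (Ideal.Quotient.mkₐ K (A.map (rename e))).toLinearMap ∘ₗ (rename e).toLinearMap
      = φ.toLinearMap ∘ₗ (Ideal.Quotient.mkₐ K A).toLinearMap :=
    LinearMap.ext fun p => (Ideal.quotientEquivAlg_mk (I := A) _ (renameEquiv K e) rfl p).symm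
  rw [hilbertFn, ← homogeneousSubmodule_map_rename_equiv e, ← Submodule.map_comp, hφ,
    Submodule.map_comp]
  exact (φ.toLinearEquiv.submoduleMap _).finrank_eq.symm

end HilbertFunction

theorem Finsupp.degree_sumElim {M α β : Type*} [AddCommMonoid M] (f : α →₀ M) (g : β →₀ M) :
    (f.sumElim g).degree = f.degree + g.degree := by
  simp [Finsupp.degree_apply]

namespace MvPolynomial

variable {R σ τ : Type*}

theorem coeff_coeff_sumAlgEquiv [CommSemiring R] (p : MvPolynomial (τ ⊕ σ) R) (w : τ →₀ ℕ)
    (u : σ →₀ ℕ) : coeff u (coeff w (sumAlgEquiv R τ σ p)) = coeff (w.sumElim u) p := by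
  simp [sumAlgEquiv, coeff, AddMonoidAlgebra.curryAlgEquiv, AddMonoidAlgebra.curryRingEquiv,
    AddMonoidAlgebra.curryAddEquiv, AddMonoidAlgebra.domCongr, AddMonoidAlgebra.coeffAddEquiv]

theorem isHomogeneous_iff_degree_eq [CommSemiring R] {p : MvPolynomial σ R} {n : ℕ} :
    p.IsHomogeneous n ↔ ∀ a, coeff a p ≠ 0 → a.degree = n := by
  simp only [Finsupp.degree_eq_weight_one, ← Pi.one_def]
  rfl

theorem isHomogeneous_iff_coeff_coeff_sumAlgEquiv [CommSemiring R] {p : MvPolynomial (τ ⊕ σ) R}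
    {d : ℕ} : p.IsHomogeneous d ↔
      ∀ w u, coeff u (coeff w (sumAlgEquiv R τ σ p)) ≠ 0 → w.degree + u.degree = d := by
  simp only [isHomogeneous_iff_degree_eq, coeff_coeff_sumAlgEquiv, ← Finsupp.degree_sumElim]
  refine ⟨fun h w u => h _, fun h a => ?_⟩
  rw [← Finsupp.sumFinsuppEquivProdFinsupp.symm_apply_apply a]
  exact h _ _

theorem mem_map_rename_inr_iff [CommRing R] {A : Ideal (MvPolynomial σ R)}
    {p : MvPolynomial (τ ⊕ σ) R} :
    p ∈ A.map (rename Sum.inr) ↔ ∀ w, coeff w (sumAlgEquiv R τ σ p) ∈ A := by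
  have hC : A.map C = (A.map (rename Sum.inr)).map (sumAlgEquiv R τ σ) := by
    change _ = Ideal.map (sumAlgEquiv R τ σ).toAlgHom _
    rw [Ideal.map_mapₐ, sumAlgEquiv_comp_rename_inr]
    rfl
  rw [← mem_map_C_iff, hC, ← Ideal.mem_comap,
    Ideal.comap_map_of_bijective _ (sumAlgEquiv R τ σ).bijective]

end MvPolynomial

section ExtensionByVariables

variable {σ τ : Type*}

local notation "ψ" => sumAlgEquiv K τ σ

theorem coeff_sumAlgEquiv_mem_homogeneousPart {A : Ideal (MvPolynomial σ K)} {d : ℕ}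
    {p : MvPolynomial (τ ⊕ σ) K}
    (hp : p ∈ (A.map (rename Sum.inr : MvPolynomial σ K →ₐ[K] _)).homogeneousPart d)
    (w : τ →₀ ℕ) : coeff w (ψ p) ∈ A.homogeneousPart (d - w.degree) := by
  rw [Ideal.mem_homogeneousPart] at hp ⊢
  refine ⟨mem_map_rename_inr_iff.mp hp.1 w, isHomogeneous_iff_degree_eq.mpr fun u hu => ?_⟩
  have := isHomogeneous_iff_coeff_coeff_sumAlgEquiv.mp hp.2 w u hu
  omega

def homogeneousPartCoeffs (A : Ideal (MvPolynomial σ K)) (d : ℕ) :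
    (A.map (rename Sum.inr : MvPolynomial σ K →ₐ[K] MvPolynomial (τ ⊕ σ) K)).homogeneousPart d
      →ₗ[K] Π w : {w : τ →₀ ℕ // w.degree ≤ d}, A.homogeneousPart (d - w.1.degree) :=
  LinearMap.pi fun w => LinearMap.codRestrict _
    ((lcoeff (MvPolynomial σ K) w.1).restrictScalars K ∘ₗ (ψ).toLinearMap ∘ₗ Submodule.subtype _)
    fun p => coeff_sumAlgEquiv_mem_homogeneousPart p.2 w.1

theorem homogeneousPartCoeffs_injective (A : Ideal (MvPolynomial σ K)) (d : ℕ) :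
    Function.Injective (homogeneousPartCoeffs (τ := τ) A d) := by
  refine (injective_iff_map_eq_zero _).mpr fun p hp => ?_
  have hψ : ψ p.1 = 0 := by
    ext w : 1
    by_cases hw : w.degree ≤ d
    · exact congrArg Subtype.val (congrFun hp ⟨w, hw⟩)
    · ext u
      by_contra hu
      have := isHomogeneous_iff_coeff_coeff_sumAlgEquiv.mp (Ideal.mem_homogeneousPart.mp p.2).2
        w u hu
      omega
  exact Subtype.ext ((ψ).injective (hψ.trans (map_zero _).symm))

theorem homogeneousPartCoeffs_surjective [Finite τ] (A : Ideal (MvPolynomial σ K)) (d : ℕ) :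
    Function.Surjective (homogeneousPartCoeffs (τ := τ) A d) := by
  classical
  intro q
  have : Fintype {w : τ →₀ ℕ // w.degree ≤ d} := (Finsupp.finite_of_degree_le d).fintype
  set p := (ψ).symm (∑ w, monomial w.1 (q w).1)
  have hcoeff : ∀ w : τ →₀ ℕ,
      coeff w (ψ p) = if h : w.degree ≤ d then (q ⟨w, h⟩).1 else 0 := by
    intro w
    simp only [p, AlgEquiv.apply_symm_apply, coeff_sum, coeff_monomial]
    split_ifs with h
    · rw [Finset.sum_eq_single ⟨w, h⟩ (fun v _ hv => if_neg fun hvw => hv (Subtype.ext hvw))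
        (by simp), if_pos rfl]
    · exact Finset.sum_eq_zero fun v _ => if_neg fun (hvw : v.1 = w) => h (hvw ▸ v.2)
  refine ⟨⟨p, mem_map_rename_inr_iff.mpr fun w => ?_,
    isHomogeneous_iff_coeff_coeff_sumAlgEquiv.mpr fun w u hu => ?_⟩, ?_⟩
  · rw [hcoeff]
    split_ifs
    exacts [(Ideal.mem_homogeneousPart.mp (q _).2).1, zero_mem _]
  · rw [hcoeff] at hu
    split_ifs at hu with h
    · have : u.degree = d - w.degree :=
        isHomogeneous_iff_degree_eq.mp (Ideal.mem_homogeneousPart.mp (q ⟨w, h⟩).2).2 u hu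
      omega
    · simp at hu
  · funext w
    exact Subtype.ext ((hcoeff w).trans (dif_pos w.2))

theorem hilbertFn_map_rename_inr_eq [Finite σ] [Finite τ] {A B : Ideal (MvPolynomial σ K)}
    (hAB : ∀ e, hilbertFn K A e = hilbertFn K B e) (d : ℕ) :
    hilbertFn K (A.map (rename Sum.inr : MvPolynomial σ K →ₐ[K] MvPolynomial (τ ⊕ σ) K)) d =
      hilbertFn K (B.map (rename Sum.inr : MvPolynomial σ K →ₐ[K] MvPolynomial (τ ⊕ σ) K)) d := by
  have coeffsEquiv (I : Ideal (MvPolynomial σ K)) := LinearEquiv.ofBijective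
    (homogeneousPartCoeffs (τ := τ) I d)
    ⟨homogeneousPartCoeffs_injective I d, homogeneousPartCoeffs_surjective I d⟩
  have partEquiv (e : ℕ) : A.homogeneousPart e ≃ₗ[K] B.homogeneousPart e :=
    LinearEquiv.ofFinrankEq _ _ (hilbertFn_eq_iff_finrank_homogeneousPart_eq.mp (hAB e))
  rw [hilbertFn_eq_iff_finrank_homogeneousPart_eq]
  exact ((coeffsEquiv A).trans
    ((LinearEquiv.piCongrRight fun w => partEquiv _).trans (coeffsEquiv B).symm)).finrank_eq

end ExtensionByVariables

theorem hilbertFn_map_rename_castLE_eq {k N : ℕ} (h : k ≤ N) {A B : Ideal (MvPolynomial (Fin k) K)}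
    (hAB : ∀ e, hilbertFn K A e = hilbertFn K B e) (d : ℕ) :
    hilbertFn K (A.map (rename (Fin.castLE h) : MvPolynomial (Fin k) K →ₐ[K] _)) d =
      hilbertFn K (B.map (rename (Fin.castLE h) : MvPolynomial (Fin k) K →ₐ[K] _)) d := by
  obtain ⟨m, rfl⟩ := Nat.exists_eq_add_of_le h
  let e : Fin m ⊕ Fin k ≃ Fin (k + m) := (Equiv.sumComm _ _).trans finSumFinEquiv
  have hsplit : Fin.castLE h = e ∘ Sum.inr := rfl
  rw [hsplit, ← rename_comp_rename, ← Ideal.map_mapₐ, ← Ideal.map_mapₐ,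
    hilbertFn_map_rename_equiv, hilbertFn_map_rename_equiv]
  exact hilbertFn_map_rename_inr_eq hAB d

theorem IsUniversalLexsegment.map_rename_castLE {k N : ℕ} (h : k ≤ N)
    {L : Ideal (MvPolynomial (Fin k) K)} (hL : IsUniversalLexsegment K L) :
    IsUniversalLexsegment K (L.map (rename (Fin.castLE h) : MvPolynomial (Fin k) K →ₐ[K] _)) := by
  have hlex (M : ℕ) (hM : k ≤ M) :
      IsLexsegmentIdeal K (L.map (rename (Fin.castLE hM) : MvPolynomial (Fin k) K →ₐ[K] _)) := by
    obtain ⟨m, rfl⟩ := Nat.exists_eq_add_of_le hM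
    exact hL.2 m
  refine ⟨hlex N h, fun m => ?_⟩
  rw [Ideal.map_mapₐ, rename_comp_rename]
  exact hlex (N + m) (h.trans (Nat.le_add_right N m))

theorem extension_ideal_not_critical_general
    {K : Type*} [Field K] {n : ℕ} (I : Ideal (MvPolynomial (Fin n) K))
    (hcrit : ¬ IsCritical K I)
    (b : ℕ)
    (J : Ideal (MvPolynomial (Fin (n - b)) K))
    -- the extension `JS` of `J` to `S` has the same Hilbert function as `I` :
    (hJS : ∀ d : ℕ, hilbertFn K
      (Ideal.map (rename (Fin.castLE (Nat.sub_le n b)) :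
        MvPolynomial (Fin (n - b)) K →ₐ[K] MvPolynomial (Fin n) K) J) d = hilbertFn K I d) :
    ¬ IsCritical K J := by
  rintro ⟨L, hL, hLJ⟩
  exact hcrit ⟨_, hL.map_rename_castLE (Nat.sub_le n b),
    fun d => (hilbertFn_map_rename_castLE_eq (Nat.sub_le n b) hLJ d).trans (hJS d)⟩

/-- Let `K` be an infinite field, `I ⊆ S = K[x₁,…,x_n]` a monomial ideal
which is not critical, and `b = depth (S/I)`.  If `J` is a graded ideal of
`S' = K[x₁,…,x_{n-b}]` whose extension `JS ⊆ S` satisfies `H_{S/JS} = H_{S/I}`, then `J` is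
not critical in `S'` : there is no universal lexsegment ideal `L' ⊆ S'` with
`H_{S'/L'} = H_{S'/J}`. -/
theorem extension_ideal_not_critical
    {K : Type*} [Field K] [Infinite K] {n : ℕ} (I : Ideal (MvPolynomial (Fin n) K))
    (hmono : IsMonomialIdeal K I) (hcrit : ¬ IsCritical K I)
    (b : ℕ) (hb : b = depthQuot K I)
    (J : Ideal (MvPolynomial (Fin (n - b)) K))
    -- `J` is a graded (homogeneous) ideal of `S' = K[x₁,…,x_{n-b}]` :
    (hJgr : ∀ p ∈ J, ∀ d : ℕ, homogeneousComponent d p ∈ J)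
    -- the extension `JS` of `J` to `S` has the same Hilbert function as `I` :
    (hJS : ∀ d : ℕ, hilbertFn K
      (Ideal.map (rename (Fin.castLE (Nat.sub_le n b)) :
        MvPolynomial (Fin (n - b)) K →ₐ[K] MvPolynomial (Fin n) K) J) d = hilbertFn K I d) :
    ¬ IsCritical K J :=
  extension_ideal_not_critical_general I hcrit b J hJS
end
end
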